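/- For every integer n ≥ 1 and every integer k with 1 ≤ k ≤ n: (n−k)/n + 1/(1−(1−1/k)^n) ≤ 2 − 1/n, with equality when k = 1. Consequently max_{k ∈ {1,…,n}} ( (n−k)/n + 1/(1−(1−1/k)^n) ) = 2 − 1/n. -/

import Mathlib

/-! Write `p = (1 - 1/k)^n`. A Bernoulli-type inequality gives `p (k - 1 + n) ≤ k - 1`, i.e.
`1 - p ≥ n / (k - 1 + n)`, so `1 / (1 - p) ≤ 1 + (k - 1)/n`; adding `(n - k)/n` gives `2 - 1/n`.
At `k = 1` we have `p = 0` and both bounds are equalities. -/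

theorem one_sub_pow_mul_one_add_mul_le_one {t : ℝ} (ht : t ≤ 1) (m : ℕ) :
    (1 - t) ^ m * (1 + m * t) ≤ 1 := by
  induction m with
  | zero => simp
  | succ m ih =>
    calc (1 - t) ^ (m + 1) * (1 + (m + 1 : ℕ) * t)
        = (1 - t) ^ m * (1 + m * t) - (1 - t) ^ m * ((m + 1) * t ^ 2) := by push_cast; ring
      _ ≤ (1 - t) ^ m * (1 + m * t) := by
        have : 0 ≤ (1 - t) ^ m * ((m + 1) * t ^ 2) := by positivity
        linarith
      _ ≤ 1 := ih

theorem one_sub_inv_pow_mul_le {x : ℝ} (hx : 1 ≤ x) (n : ℕ) :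
    (1 - x⁻¹) ^ n * (x - 1 + n) ≤ x - 1 := by
  cases n with
  | zero => simp
  | succ m =>
    have hx0 : 0 < x := by linarith
    have key := one_sub_pow_mul_one_add_mul_le_one (inv_le_one_of_one_le₀ hx) m
    calc (1 - x⁻¹) ^ (m + 1) * (x - 1 + (m + 1 : ℕ))
        = (x - 1) * ((1 - x⁻¹) ^ m * (1 + m * x⁻¹)) := by
          have hxx : x * x⁻¹ = 1 := mul_inv_cancel₀ hx0.ne'
          push_cast
          linear_combination -(1 - x⁻¹) ^ m * (m + 1) * hxx
      _ ≤ x - 1 := mul_le_of_le_one_right (by linarith) key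

theorem inv_one_sub_one_sub_inv_pow_le {x : ℝ} (hx : 1 ≤ x) {n : ℕ} (hn : 1 ≤ n) :
    (1 - (1 - x⁻¹) ^ n)⁻¹ ≤ (x - 1 + n) / n := by
  have hn0 : (0 : ℝ) < n := by exact_mod_cast hn
  have hp := one_sub_inv_pow_mul_le hx n
  have hgap : 0 < 1 - (1 - x⁻¹) ^ n := by nlinarith
  rw [inv_eq_one_div, div_le_div_iff₀ hgap hn0]
  linarith

/-- Lemma 5: for `1 ≤ k ≤ n`, `(n - k)/n + 1/(1 - (1 - 1/k)^n) ≤ 2 - 1/n`,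
with equality at `k = 1`; hence the maximum over `k` equals `2 - 1/n`. -/
theorem stmt_7 (n : ℕ) (hn : 1 ≤ n) :
    (∀ k : ℕ, 1 ≤ k → k ≤ n →
        ((n : ℝ) - (k : ℝ)) / (n : ℝ) + 1 / (1 - (1 - 1 / (k : ℝ)) ^ n)
          ≤ 2 - 1 / (n : ℝ)) ∧
    ((n : ℝ) - (1 : ℝ)) / (n : ℝ) + 1 / (1 - (1 - 1 / (1 : ℝ)) ^ n)
      = 2 - 1 / (n : ℝ) := by
  have hn0 : (n : ℝ) ≠ 0 := by positivity
  refine ⟨fun k hk _ => ?_, ?_⟩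
  · have hk' : (1 : ℝ) ≤ k := by exact_mod_cast hk
    calc ((n : ℝ) - k) / n + 1 / (1 - (1 - 1 / (k : ℝ)) ^ n)
        ≤ ((n : ℝ) - k) / n + (k - 1 + n) / n := by
          simpa only [one_div, add_le_add_iff_left] using inv_one_sub_one_sub_inv_pow_le hk' hn
      _ = 2 - 1 / n := by field_simp; ring
  · norm_num [zero_pow (Nat.one_le_iff_ne_zero.1 hn)]
    field_simp
    ring
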